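/- Let a ∈ L^∞(ℝ) have finite limits a(−∞) = lim_{y→−∞} a(y) and a(+∞) = lim_{y→+∞} a(y). Then the matrix-valued function φ^a(t₁,t₂) = ∫_ℝ a((−t₁+s)/(2√(t₂(t₁²+1)))) H(s)[H(s)]^T ds on Π = ℝ × (0,∞) satisfies: for every ε > 0 there exist δ > 0 and Nₒ > 0 such that ‖φ^a(t₁,t₂) − a(−∞)·I‖ < ε whenever 0 < t₂ < δ and t₁ > Nₒ; and analogously ‖φ^a(t₁,t₂) − a(+∞)·I‖ < ε whenever 0 < t₂ < δ and t₁ < −Nₒ (for suitable δ, Nₒ). That is, lim_{(t₁,t₂)→(+∞,0)} φ^a(t₁,t₂) = a(−∞)·I and lim_{(t₁,t₂)→(−∞,0)} φ^a(t₁,t₂) = a(+∞)·I. -/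

import Mathlib

open MeasureTheory Filter Topology
open scoped Matrix.Norms.L2Operator

noncomputable section

/-- The physicists' Hermite polynomial `H_m(y) = (−1)^m e^{y²} (d/dy)^m e^{−y²}`. -/
def hermiteH (m : ℕ) (y : ℝ) : ℝ :=
  (-1 : ℝ) ^ m * Real.exp (y ^ 2) * iteratedDeriv m (fun x => Real.exp (-x ^ 2)) y

/-- The Hermite function `h_m(y) = (2^m m! √π)^{−1/2} H_m(y) e^{−y²/2}`. -/
def hermiteFun (m : ℕ) (y : ℝ) : ℝ :=
  (Real.sqrt (2 ^ m * m.factorial * Real.sqrt Real.pi))⁻¹ * hermiteH m y *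
    Real.exp (-y ^ 2 / 2)

/-- The matrix `H(y)[H(y)]ᵀ`, where `H(y) = (h_0(y), …, h_{n−1}(y))ᵀ`. -/
def HHT (n : ℕ) (y : ℝ) : Matrix (Fin n) (Fin n) ℝ :=
  Matrix.of fun j k : Fin n => hermiteFun j y * hermiteFun k y

/-- `φ^a(t₁,t₂) = ∫_ℝ a((−t₁+s)/(2√(t₂(t₁²+1)))) H(s)[H(s)]ᵀ ds` as a complex matrix. -/
def phiA (n : ℕ) (a : ℝ → ℂ) (t₁ t₂ : ℝ) : Matrix (Fin n) (Fin n) ℂ :=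
  Matrix.of fun j k : Fin n =>
    ∫ s : ℝ, a ((-t₁ + s) / (2 * Real.sqrt (t₂ * (t₁ ^ 2 + 1)))) * (HHT n s j k : ℂ)

/-!
The Hermite functions are orthonormal: integrating `H_j` by parts `k` times against
`dᵏ/dyᵏ e^{-y²} = (-1)ᵏ H_k e^{-y²}` leaves `∫ H_j⁽ᵏ⁾ e^{-y²}`, which vanishes for `j < k`.
Writing `c_t(s) = (-t₁ + s) / (2√(t₂(t₁² + 1)))` for the argument of `a`, dominated convergence
(`a` bounded, `h_j h_k` integrable) gives `φ^a(t)_{jk} → L ∫ h_j h_k = L δ_jk` along any filter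
on which `c_t(s) → ∓∞` for every fixed `s`, where `a → L` at `∓∞`. Near `(+∞, 0)` one has
`c_t(s) ≤ -1/(8√t₂)` once `t₁ ≥ max(1, 2s)`; the corner `(-∞, 0)` follows from
`c_{(-t₁, t₂)}(s) = -c_{(t₁, t₂)}(-s)`.
-/

open Polynomial

def physHermite : ℕ → ℝ[X]
  | 0 => 1
  | m + 1 => C 2 * X * physHermite m - derivative (physHermite m)

lemma hasDerivAt_iteratedDeriv_exp_neg_sq (m : ℕ) (y : ℝ) :
    HasDerivAt (iteratedDeriv m fun x : ℝ => Real.exp (-x ^ 2))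
      (iteratedDeriv (m + 1) (fun x : ℝ => Real.exp (-x ^ 2)) y) y := by
  rw [iteratedDeriv_succ]
  have hsmooth : ContDiff ℝ ⊤ fun x : ℝ => Real.exp (-x ^ 2) := by fun_prop
  exact (hsmooth.differentiable_iteratedDeriv m (WithTop.coe_lt_top _) y).hasDerivAt

lemma iteratedDeriv_exp_neg_sq (m : ℕ) :
    iteratedDeriv m (fun x : ℝ => Real.exp (-x ^ 2))
      = fun y => (-1) ^ m * ((physHermite m).eval y * Real.exp (-y ^ 2)) := by
  induction m with
  | zero => simp [physHermite]
  | succ m ih =>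
    funext y
    have hgauss : HasDerivAt (fun x : ℝ => Real.exp (-x ^ 2)) (-2 * y * Real.exp (-y ^ 2)) y :=
      (((hasDerivAt_pow 2 y).neg).exp).congr_deriv (by
        simp only [Pi.neg_apply, Nat.cast_ofNat, Nat.add_one_sub_one, pow_one]; ring)
    have hd := (((physHermite m).hasDerivAt y).mul hgauss).const_mul ((-1 : ℝ) ^ m)
    rw [iteratedDeriv_succ, ih]
    refine hd.deriv.trans ?_
    simp only [physHermite, eval_sub, eval_mul, eval_C, eval_X]
    ring

lemma hermiteH_eq_eval (m : ℕ) (y : ℝ) : hermiteH m y = (physHermite m).eval y := by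
  rw [hermiteH, iteratedDeriv_exp_neg_sq]
  calc (-1) ^ m * Real.exp (y ^ 2) * ((-1) ^ m * ((physHermite m).eval y * Real.exp (-y ^ 2)))
      = ((-1) ^ 2) ^ m * Real.exp (y ^ 2 + -y ^ 2) * (physHermite m).eval y := by
        rw [Real.exp_add, ← pow_mul, mul_comm 2 m, pow_mul]; ring
    _ = (physHermite m).eval y := by simp

lemma natDegree_physHermite_and_coeff (m : ℕ) :
    (physHermite m).natDegree = m ∧ (physHermite m).coeff m = 2 ^ m := by
  induction m with
  | zero => simp [physHermite]
  | succ m ih =>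
    obtain ⟨hdeg, hcoeff⟩ := ih
    have hne : physHermite m ≠ 0 := fun h =>
      pow_ne_zero m (two_ne_zero : (2 : ℝ) ≠ 0) (by rw [← hcoeff, h, coeff_zero])
    have hmul : (C 2 * X * physHermite m).natDegree = m + 1 := by
      rw [natDegree_mul (by simp) hne, natDegree_C_mul_X 2 two_ne_zero, hdeg, add_comm]
    have hder : (derivative (physHermite m)).natDegree < m + 1 :=
      (natDegree_derivative_le _).trans_lt (by omega)
    refine ⟨?_, ?_⟩
    · rw [physHermite, natDegree_sub_eq_left_of_natDegree_lt (hmul ▸ hder), hmul]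
    · rw [physHermite, coeff_sub, coeff_eq_zero_of_natDegree_lt hder, mul_assoc, coeff_C_mul,
        coeff_X_mul, hcoeff, pow_succ]
      ring

lemma iterate_derivative_physHermite_self (m : ℕ) :
    derivative^[m] (physHermite m) = C ((m.factorial : ℝ) * 2 ^ m) := by
  obtain ⟨hdeg, hcoeff⟩ := natDegree_physHermite_and_coeff m
  have h0 : (derivative^[m] (physHermite m)).natDegree = 0 := by
    have := natDegree_iterate_derivative (physHermite m) m
    omega
  rw [eq_C_of_natDegree_eq_zero h0, coeff_iterate_derivative, zero_add, hcoeff,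
    Nat.descFactorial_self, nsmul_eq_mul]

lemma iterate_derivative_physHermite_of_lt {j k : ℕ} (h : j < k) :
    derivative^[k] (physHermite j) = 0 :=
  iterate_derivative_eq_zero (by rw [(natDegree_physHermite_and_coeff j).1]; exact h)

lemma integrable_eval_mul_exp_neg_sq (p : ℝ[X]) :
    Integrable fun x : ℝ => p.eval x * Real.exp (-x ^ 2) := by
  have hpow (i : ℕ) : Integrable fun x : ℝ => x ^ i * Real.exp (-x ^ 2) := by
    simpa [Real.rpow_natCast] using
      integrable_rpow_mul_exp_neg_mul_sq one_pos (s := i) (by linarith [i.cast_nonneg (α := ℝ)])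
  simp_rw [eval_eq_sum_range, Finset.sum_mul, mul_assoc]
  exact integrable_finsetSum _ fun i _ => (hpow i).const_mul _

lemma integrable_eval_mul_iteratedDeriv_exp_neg_sq (p : ℝ[X]) (m : ℕ) :
    Integrable fun x : ℝ => p.eval x * iteratedDeriv m (fun x : ℝ => Real.exp (-x ^ 2)) x := by
  refine ((integrable_eval_mul_exp_neg_sq (p * physHermite m)).const_mul ((-1) ^ m)).congr
    (.of_forall fun x => ?_)
  simp only [iteratedDeriv_exp_neg_sq, eval_mul]
  ring

lemma integral_eval_mul_iteratedDeriv_exp_neg_sq (k : ℕ) (p : ℝ[X]) :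
    ∫ y : ℝ, p.eval y * iteratedDeriv k (fun x : ℝ => Real.exp (-x ^ 2)) y
      = (-1) ^ k * ∫ y : ℝ, (derivative^[k] p).eval y * Real.exp (-y ^ 2) := by
  induction k generalizing p with
  | zero => simp
  | succ k ih =>
    rw [integral_mul_deriv_eq_deriv_mul_of_integrable (fun x _ => p.hasDerivAt x)
      (fun x _ => hasDerivAt_iteratedDeriv_exp_neg_sq k x)
      (integrable_eval_mul_iteratedDeriv_exp_neg_sq p (k + 1))
      (integrable_eval_mul_iteratedDeriv_exp_neg_sq (derivative p) k)
      (integrable_eval_mul_iteratedDeriv_exp_neg_sq p k), ih, Function.iterate_succ_apply,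
      pow_succ]
    ring

lemma integral_eval_mul_physHermite_mul_exp_neg_sq (p : ℝ[X]) (k : ℕ) :
    ∫ y : ℝ, p.eval y * ((physHermite k).eval y * Real.exp (-y ^ 2))
      = ∫ y : ℝ, (derivative^[k] p).eval y * Real.exp (-y ^ 2) := by
  have hsign : ((-1 : ℝ) ^ k) ^ 2 = 1 := by rw [← pow_mul, mul_comm, pow_mul]; simp
  calc ∫ y : ℝ, p.eval y * ((physHermite k).eval y * Real.exp (-y ^ 2))
      = (-1) ^ k * ∫ y : ℝ, p.eval y * iteratedDeriv k (fun x : ℝ => Real.exp (-x ^ 2)) y := by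
        rw [← integral_const_mul]
        congr 1 with y
        rw [iteratedDeriv_exp_neg_sq]
        linear_combination (p.eval y * (physHermite k).eval y * Real.exp (-y ^ 2)) * hsign.symm
    _ = _ := by
        rw [integral_eval_mul_iteratedDeriv_exp_neg_sq, ← mul_assoc, ← sq, hsign, one_mul]

lemma integral_physHermite_mul_physHermite_mul_exp_neg_sq (j k : ℕ) :
    ∫ y : ℝ, (physHermite j).eval y * ((physHermite k).eval y * Real.exp (-y ^ 2))
      = if j = k then 2 ^ j * j.factorial * Real.sqrt Real.pi else 0 := by
  rcases lt_trichotomy j k with h | rfl | h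
  · simp [integral_eval_mul_physHermite_mul_exp_neg_sq, iterate_derivative_physHermite_of_lt h,
      h.ne]
  · have hgauss : ∫ y : ℝ, Real.exp (-y ^ 2) = Real.sqrt Real.pi := by
      simpa using integral_gaussian 1
    rw [if_pos rfl, integral_eval_mul_physHermite_mul_exp_neg_sq,
      iterate_derivative_physHermite_self]
    simp only [eval_C, integral_const_mul, hgauss]
    ring
  · simp_rw [mul_left_comm ((physHermite j).eval _)]
    simp [integral_eval_mul_physHermite_mul_exp_neg_sq, iterate_derivative_physHermite_of_lt h,
      h.ne']

lemma hermiteFun_mul_hermiteFun (j k : ℕ) (y : ℝ) :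
    hermiteFun j y * hermiteFun k y
      = ((Real.sqrt (2 ^ j * j.factorial * Real.sqrt Real.pi))⁻¹
          * (Real.sqrt (2 ^ k * k.factorial * Real.sqrt Real.pi))⁻¹)
        * ((physHermite j).eval y * ((physHermite k).eval y * Real.exp (-y ^ 2))) := by
  have hexp : Real.exp (-y ^ 2) = Real.exp (-y ^ 2 / 2) * Real.exp (-y ^ 2 / 2) := by
    rw [← Real.exp_add]; ring_nf
  rw [hermiteFun, hermiteFun, hermiteH_eq_eval, hermiteH_eq_eval, hexp]
  ring

lemma integrable_hermiteFun_mul_hermiteFun (j k : ℕ) :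
    Integrable fun y : ℝ => hermiteFun j y * hermiteFun k y := by
  simp_rw [hermiteFun_mul_hermiteFun, ← mul_assoc ((physHermite j).eval _), ← eval_mul]
  exact (integrable_eval_mul_exp_neg_sq _).const_mul _

lemma integral_hermiteFun_mul_hermiteFun (j k : ℕ) :
    ∫ y : ℝ, hermiteFun j y * hermiteFun k y = if j = k then 1 else 0 := by
  simp_rw [hermiteFun_mul_hermiteFun]
  rw [integral_const_mul, integral_physHermite_mul_physHermite_mul_exp_neg_sq]
  split_ifs with h
  · subst h
    have hpos : 0 < 2 ^ j * (j.factorial : ℝ) * Real.sqrt Real.pi := by positivity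
    rw [← mul_inv, Real.mul_self_sqrt hpos.le, inv_mul_cancel₀ hpos.ne']
  · simp

lemma integrable_HHT_apply (n : ℕ) (j k : Fin n) : Integrable fun s : ℝ => HHT n s j k :=
  integrable_hermiteFun_mul_hermiteFun j k

lemma integral_HHT_apply (n : ℕ) (j k : Fin n) :
    ∫ s : ℝ, HHT n s j k = (1 : Matrix (Fin n) (Fin n) ℝ) j k := by
  simp [HHT, integral_hermiteFun_mul_hermiteFun, Matrix.one_apply, Fin.val_inj]

lemma tendsto_integral_mul_of_bounded {α ι 𝕜 : Type*} [MeasurableSpace α] {μ : Measure α}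
    [RCLike 𝕜] {l : Filter ι} [l.IsCountablyGenerated] {F : ι → α → 𝕜} {w : α → 𝕜} {L : 𝕜}
    {C : ℝ} (hw : Integrable w μ) (hF_meas : ∀ i, AEStronglyMeasurable (F i) μ)
    (hF_bdd : ∀ i x, ‖F i x‖ ≤ C) (hF_lim : ∀ x, Tendsto (F · x) l (𝓝 L)) :
    Tendsto (fun i => ∫ x, F i x * w x ∂μ) l (𝓝 (L * ∫ x, w x ∂μ)) := by
  rw [← integral_const_mul]
  refine tendsto_integral_filter_of_dominated_convergence (fun x => C * ‖w x‖)
    (.of_forall fun i => (hF_meas i).mul hw.aestronglyMeasurable)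
    (.of_forall fun i => .of_forall fun x => ?_) (hw.norm.const_mul C)
    (.of_forall fun x => (hF_lim x).mul_const (w x))
  rw [norm_mul]
  exact mul_le_mul_of_nonneg_right (hF_bdd i x) (norm_nonneg _)

def phiArg (t₁ t₂ s : ℝ) : ℝ := (-t₁ + s) / (2 * Real.sqrt (t₂ * (t₁ ^ 2 + 1)))

lemma tendsto_phiA {l : Filter (ℝ × ℝ)} [l.IsCountablyGenerated] {l' : Filter ℝ} (n : ℕ)
    {a : ℝ → ℂ} {L : ℂ} (ha_meas : Measurable a) (ha_bdd : ∃ C : ℝ, ∀ y, ‖a y‖ ≤ C)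
    (ha : Tendsto a l' (𝓝 L)) (harg : ∀ s, Tendsto (fun t : ℝ × ℝ => phiArg t.1 t.2 s) l l') :
    Tendsto (fun t : ℝ × ℝ => phiA n a t.1 t.2) l (𝓝 (L • 1)) := by
  obtain ⟨C, hC⟩ := ha_bdd
  -- the L2 operator norm instance carries the product topology, so entrywise convergence suffices
  refine tendsto_pi_nhds.2 fun j => tendsto_pi_nhds.2 fun k => ?_
  have h := tendsto_integral_mul_of_bounded (μ := volume) (integrable_HHT_apply n j k).ofReal
    (fun t : ℝ × ℝ => (ha_meas.comp (by unfold phiArg; fun_prop :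
      Measurable (phiArg t.1 t.2))).aestronglyMeasurable)
    (fun t s => hC _) (fun s => ha.comp (harg s))
  rw [integral_ofReal, integral_HHT_apply] at h
  convert h using 2
  · rfl
  · rw [Matrix.smul_apply, Matrix.one_apply, Matrix.one_apply]
    split_ifs <;> simp

lemma phiArg_le {t₁ t₂ s : ℝ} (hs : 2 * s ≤ t₁) (ht₁ : 1 ≤ t₁) (ht₂ : 0 < t₂) :
    phiArg t₁ t₂ s ≤ -(8 * Real.sqrt t₂)⁻¹ := by
  have hr := Real.sqrt_pos.2 ht₂
  have hq : Real.sqrt (t₁ ^ 2 + 1) ≤ 2 * t₁ := Real.sqrt_le_iff.2 ⟨by linarith, by nlinarith⟩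
  have hq0 : 0 < Real.sqrt (t₁ ^ 2 + 1) := Real.sqrt_pos.2 (by positivity)
  have hD : (8 * Real.sqrt t₂)⁻¹ * (2 * (Real.sqrt t₂ * Real.sqrt (t₁ ^ 2 + 1)))
      = Real.sqrt (t₁ ^ 2 + 1) / 4 := by
    field_simp
    ring
  rw [phiArg, Real.sqrt_mul ht₂.le, div_le_iff₀ (by positivity), neg_mul, hD]
  linarith

lemma tendsto_inv_mul_sqrt_nhdsGT_zero {c : ℝ} (hc : 0 < c) :
    Tendsto (fun t : ℝ => (c * Real.sqrt t)⁻¹) (𝓝[>] 0) atTop := by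
  refine tendsto_inv_nhdsGT_zero.comp (tendsto_nhdsWithin_iff.2 ⟨?_, ?_⟩)
  · simpa using ((Real.continuous_sqrt.tendsto 0).const_mul c).mono_left nhdsWithin_le_nhds
  · filter_upwards [self_mem_nhdsWithin] with t ht
    exact mul_pos hc (Real.sqrt_pos.2 ht)

lemma tendsto_phiArg_atTop_nhdsGT (s : ℝ) :
    Tendsto (fun t : ℝ × ℝ => phiArg t.1 t.2 s) (atTop ×ˢ 𝓝[>] 0) atBot := by
  refine tendsto_atBot_mono' _ ?_ (tendsto_neg_atTop_atBot.comp
    ((tendsto_inv_mul_sqrt_nhdsGT_zero (c := 8) (by norm_num)).comp tendsto_snd))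
  filter_upwards [(eventually_ge_atTop (max 1 (2 * s))).prod_mk self_mem_nhdsWithin] with t ht
  exact phiArg_le (le_of_max_le_right ht.1) (le_of_max_le_left ht.1) ht.2

lemma phiArg_eq_neg (t₁ t₂ s : ℝ) : phiArg t₁ t₂ s = -phiArg (-t₁) t₂ (-s) := by
  rw [phiArg, phiArg, neg_sq, ← neg_div]
  ring_nf

lemma tendsto_phiArg_atBot_nhdsGT (s : ℝ) :
    Tendsto (fun t : ℝ × ℝ => phiArg t.1 t.2 s) (atBot ×ˢ 𝓝[>] 0) atTop :=
  (tendsto_neg_atBot_atTop.comp ((tendsto_phiArg_atTop_nhdsGT (-s)).comp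
    (tendsto_neg_atBot_atTop.prodMap tendsto_id))).congr fun t => (phiArg_eq_neg t.1 t.2 s).symm

lemma exists_of_eventually_atTop_prod_nhdsGT {p : ℝ → ℝ → Prop}
    (h : ∀ᶠ t in atTop ×ˢ 𝓝[>] (0 : ℝ), p t.1 t.2) :
    ∃ δ > (0 : ℝ), ∃ N > (0 : ℝ), ∀ t₁ t₂ : ℝ, 0 < t₂ → t₂ < δ → N < t₁ → p t₁ t₂ := by
  obtain ⟨P, hP, Q, hQ, hPQ⟩ := eventually_prod_iff.1 h
  obtain ⟨N, hN⟩ := eventually_atTop.1 hP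
  obtain ⟨δ, hδ, hδQ⟩ := mem_nhdsGT_iff_exists_Ioo_subset.1 hQ
  exact ⟨δ, hδ, max N 1, by positivity, fun t₁ t₂ h₀ hδ' hN' =>
    hPQ (hN _ ((le_max_left N 1).trans hN'.le)) (hδQ ⟨h₀, hδ'⟩)⟩

lemma exists_of_eventually_atBot_prod_nhdsGT {p : ℝ → ℝ → Prop}
    (h : ∀ᶠ t in atBot ×ˢ 𝓝[>] (0 : ℝ), p t.1 t.2) :
    ∃ δ > (0 : ℝ), ∃ N > (0 : ℝ), ∀ t₁ t₂ : ℝ, 0 < t₂ → t₂ < δ → t₁ < -N → p t₁ t₂ := by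
  obtain ⟨δ, hδ, N, hN, hp⟩ := exists_of_eventually_atTop_prod_nhdsGT (p := fun t₁ t₂ => p (-t₁) t₂)
    ((tendsto_neg_atTop_atBot.prodMap tendsto_id).eventually h)
  exact ⟨δ, hδ, N, hN, fun t₁ t₂ h₀ hδ' hN' => by simpa using hp (-t₁) t₂ h₀ hδ' (by linarith)⟩

theorem phiA_limit_corners_general (n : ℕ) (a : ℝ → ℂ)
    (ha_meas : Measurable a) (ha_bdd : ∃ C : ℝ, ∀ y : ℝ, ‖a y‖ ≤ C)
    (aminus aplus : ℂ)
    (haminus : Tendsto a atBot (𝓝 aminus)) (haplus : Tendsto a atTop (𝓝 aplus)) :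
    (∀ ε > (0 : ℝ), ∃ δ > (0 : ℝ), ∃ N > (0 : ℝ), ∀ t₁ t₂ : ℝ,
        0 < t₂ → t₂ < δ → N < t₁ →
        ‖phiA n a t₁ t₂ - aminus • (1 : Matrix (Fin n) (Fin n) ℂ)‖ < ε) ∧
      (∀ ε > (0 : ℝ), ∃ δ > (0 : ℝ), ∃ N > (0 : ℝ), ∀ t₁ t₂ : ℝ,
        0 < t₂ → t₂ < δ → t₁ < -N →
        ‖phiA n a t₁ t₂ - aplus • (1 : Matrix (Fin n) (Fin n) ℂ)‖ < ε) := by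
  have hright := tendsto_phiA n ha_meas ha_bdd haminus tendsto_phiArg_atTop_nhdsGT
  have hleft := tendsto_phiA n ha_meas ha_bdd haplus tendsto_phiArg_atBot_nhdsGT
  simp only [Metric.tendsto_nhds, dist_eq_norm] at hright hleft
  exact ⟨fun ε hε => exists_of_eventually_atTop_prod_nhdsGT (hright ε hε),
    fun ε hε => exists_of_eventually_atBot_prod_nhdsGT (hleft ε hε)⟩

/-- If `a ∈ L^∞(ℝ)` has limits `a(−∞)`, `a(+∞)`, then
`φ^a(t₁,t₂) → a(−∞)·I` as `(t₁,t₂) → (+∞,0)` and `φ^a(t₁,t₂) → a(+∞)·I` as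
`(t₁,t₂) → (−∞,0)`, in the ε–δ sense stated. -/
theorem phiA_limit_corners (n : ℕ) (hn : 1 ≤ n) (a : ℝ → ℂ)
    (ha_meas : Measurable a) (ha_bdd : ∃ C : ℝ, ∀ y : ℝ, ‖a y‖ ≤ C)
    (aminus aplus : ℂ)
    (haminus : Tendsto a atBot (𝓝 aminus)) (haplus : Tendsto a atTop (𝓝 aplus)) :
    (∀ ε > (0 : ℝ), ∃ δ > (0 : ℝ), ∃ N > (0 : ℝ), ∀ t₁ t₂ : ℝ,
        0 < t₂ → t₂ < δ → N < t₁ →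
        ‖phiA n a t₁ t₂ - aminus • (1 : Matrix (Fin n) (Fin n) ℂ)‖ < ε) ∧
      (∀ ε > (0 : ℝ), ∃ δ > (0 : ℝ), ∃ N > (0 : ℝ), ∀ t₁ t₂ : ℝ,
        0 < t₂ → t₂ < δ → t₁ < -N →
        ‖phiA n a t₁ t₂ - aplus • (1 : Matrix (Fin n) (Fin n) ℂ)‖ < ε) :=
  phiA_limit_corners_general n a ha_meas ha_bdd aminus aplus haminus haplus
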